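/- For all x,y ∈ ℝ³ with x×y ≠ 0, the isotropy type set of G³(x,y) is the disjoint union M_{G³(x,y)} = D₁(x,y) ∪ D₂(x,y) ∪ D₃(x,y) ∪ D₄(x,y), where D₁(x,y) = {(λy+x, βy+x, 0, 0) : λ,β ∈ ℝ, λ ≠ β}, D₂(x,y) = {(λy+x, βy+x, 0, δy) : λ,β,δ ∈ ℝ, δ ≠ 0}, D₃(x,y) = {(λy+x, βy+x, γy, 0) : λ,β,γ ∈ ℝ, γ ≠ 0}, and D₄(x,y) = {(λy+x, βy+x, γy, δy) : λ,β,γ,δ ∈ ℝ, γ ≠ 0, δ ≠ 0}. -/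

import Mathlib

open Matrix

/-- Vectors in ℝ³. -/
abbrev V3 : Type := Fin 3 → ℝ

/-- The two-body phase space M = ℝ³ × ℝ³ × ℝ³ × ℝ³, points (q¹, q², p¹, p²). -/
abbrev M2B : Type := V3 × V3 × V3 × V3

/-- A 3×3 real matrix is special orthogonal. -/
def SO3 (A : Matrix (Fin 3) (Fin 3) ℝ) : Prop := Aᵀ * A = 1 ∧ A.det = 1

/-- The action of (A, a) ∈ SE(3) on the phase space:
(A,a)·(q¹,q²,p¹,p²) = (Aq¹+a, Aq²+a, Ap¹, Ap²). -/
def act (A : Matrix (Fin 3) (Fin 3) ℝ) (a : V3) (m : M2B) : M2B :=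
  (A *ᵥ m.1 + a, A *ᵥ m.2.1 + a, A *ᵥ m.2.2.1, A *ᵥ m.2.2.2)

/-- The isotropy subgroup SE(3)_{(q,p)} of a point of M, as a set of pairs (A,a)
with A special orthogonal. -/
def isotropy (m : M2B) : Set (Matrix (Fin 3) (Fin 3) ℝ × V3) :=
  {g | SO3 g.1 ∧ act g.1 g.2 m = m}

/-- The momentum map J(q¹,q²,p¹,p²) = (q¹×p¹ + q²×p², p¹+p²). -/
def Jmom (m : M2B) : V3 × V3 :=
  (m.1 ⨯₃ m.2.2.1 + m.2.1 ⨯₃ m.2.2.2, m.2.2.1 + m.2.2.2)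

/-- G¹(x) = {(A,a) ∈ SE(3) : a = x − Ax}. -/
def G1 (x : V3) : Set (Matrix (Fin 3) (Fin 3) ℝ × V3) :=
  {g | SO3 g.1 ∧ g.2 = x - g.1 *ᵥ x}

/-- G²(y) = {(A,0) ∈ SE(3) : Ay = y}. -/
def G2 (y : V3) : Set (Matrix (Fin 3) (Fin 3) ℝ × V3) :=
  {g | SO3 g.1 ∧ g.1 *ᵥ y = y ∧ g.2 = 0}

/-- G³(x,y) = {(A,a) ∈ SE(3) : Ay = y and a = x − Ax}. -/
def G3 (x y : V3) : Set (Matrix (Fin 3) (Fin 3) ℝ × V3) :=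
  {g | SO3 g.1 ∧ g.1 *ᵥ y = y ∧ g.2 = x - g.1 *ᵥ x}

/-- G⁴ = {(I, 0)}, the trivial subgroup. -/
def G4 : Set (Matrix (Fin 3) (Fin 3) ℝ × V3) := {((1 : Matrix (Fin 3) (Fin 3) ℝ), (0 : V3))}

def D1 (x y : V3) : Set M2B := {m | ∃ l b : ℝ, l ≠ b ∧ m = (l • y + x, b • y + x, 0, 0)}
def D2 (x y : V3) : Set M2B := {m | ∃ l b d : ℝ, d ≠ 0 ∧ m = (l • y + x, b • y + x, 0, d • y)}
def D3 (x y : V3) : Set M2B := {m | ∃ l b c : ℝ, c ≠ 0 ∧ m = (l • y + x, b • y + x, c • y, 0)}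
def D4 (x y : V3) : Set M2B :=
  {m | ∃ l b c d : ℝ, c ≠ 0 ∧ d ≠ 0 ∧ m = (l • y + x, b • y + x, c • y, d • y)}

/-!
A point whose isotropy group is `G³(x,y)` is fixed by the half-turn about the axis `x + ℝy`, so
both positions lie on that axis and both momenta are parallel to `y`. Conversely, at such a point
the isotropy group is exactly `G³(x,y)`, except when both particles are at rest at the same point
`q`: then every rotation about `q` fixes it, among them the half-turn about the direction `x`,
which moves `y` because `x × y ≠ 0`. The four pieces are told apart by which momenta vanish.
-/

theorem mulVec_eq_self_of_smul {n : Type*} [Fintype n] {A : Matrix n n ℝ} {v : n → ℝ} {c : ℝ}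
    (hc : c ≠ 0) (h : A *ᵥ (c • v) = c • v) : A *ᵥ v = v :=
  smul_right_injective _ hc (by simpa only [mulVec_smul] using h)

section HalfTurn

variable {n : Type*} [Fintype n] [DecidableEq n]

noncomputable def halfTurn (y : n → ℝ) : Matrix n n ℝ :=
  (2 / (y ⬝ᵥ y)) • vecMulVec y y - 1

theorem halfTurn_mulVec (y v : n → ℝ) :
    halfTurn y *ᵥ v = (2 / (y ⬝ᵥ y) * (y ⬝ᵥ v)) • y - v := by
  rw [halfTurn, sub_mulVec, smul_mulVec, vecMulVec_mulVec, one_mulVec, op_smul_eq_smul,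
    smul_smul]

theorem halfTurn_mulVec_self {y : n → ℝ} (hy : y ≠ 0) : halfTurn y *ᵥ y = y := by
  have : y ⬝ᵥ y ≠ 0 := dotProduct_self_eq_zero.not.2 hy
  rw [halfTurn_mulVec, div_mul_cancel₀ _ this]
  module

theorem exists_eq_smul_of_halfTurn_mulVec_eq {y v : n → ℝ} (h : halfTurn y *ᵥ v = v) :
    ∃ c : ℝ, v = c • y := by
  rw [halfTurn_mulVec, sub_eq_iff_eq_add, ← two_smul ℝ] at h
  exact ⟨2 / (y ⬝ᵥ y) * (y ⬝ᵥ v) / 2, by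
    rw [div_eq_inv_mul, mul_smul, h, smul_smul, inv_mul_cancel₀ two_ne_zero, one_smul]⟩

theorem halfTurn_transpose {y : n → ℝ} : (halfTurn y)ᵀ = halfTurn y := by
  simp [halfTurn, transpose_vecMulVec]

theorem halfTurn_transpose_mul_self {y : n → ℝ} (hy : y ≠ 0) :
    (halfTurn y)ᵀ * halfTurn y = 1 := by
  have : y ⬝ᵥ y ≠ 0 := dotProduct_self_eq_zero.not.2 hy
  rw [halfTurn_transpose]
  have hk : 2 / (y ⬝ᵥ y) * (2 / (y ⬝ᵥ y)) * (y ⬝ᵥ y) = 2 * (2 / (y ⬝ᵥ y)) := by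
    field_simp
  simp only [halfTurn, sub_mul, mul_sub, smul_mul_smul_comm, vecMulVec_mul_vecMulVec,
    vecMulVec_smul, smul_smul, hk, mul_one, one_mul]
  module

end HalfTurn

theorem det_halfTurn {y : Fin 3 → ℝ} (hy : y ≠ 0) : (halfTurn y).det = 1 := by
  have : y ⬝ᵥ y ≠ 0 := dotProduct_self_eq_zero.not.2 hy
  have h : halfTurn y = -(1 + vecMulVec (-(2 / (y ⬝ᵥ y)) • y) y) := by
    rw [halfTurn, neg_smul, neg_vecMulVec, smul_vecMulVec]
    abel
  rw [h, det_neg, vecMulVec_eq Unit, det_one_add_replicateCol_mul_replicateRow, dotProduct_smul,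
    smul_eq_mul, Fintype.card_fin]
  field_simp
  ring

theorem SO3_halfTurn {y : V3} (hy : y ≠ 0) : SO3 (halfTurn y) :=
  ⟨halfTurn_transpose_mul_self hy, det_halfTurn hy⟩

/-- `(A, x - A x)` is the rotation `A` about the point `x`. -/
theorem act_sub_mulVec_eq_self_iff (A : Matrix (Fin 3) (Fin 3) ℝ) (x : V3) (m : M2B) :
    act A (x - A *ᵥ x) m = m ↔
      A *ᵥ (m.1 - x) = m.1 - x ∧ A *ᵥ (m.2.1 - x) = m.2.1 - x ∧
        A *ᵥ m.2.2.1 = m.2.2.1 ∧ A *ᵥ m.2.2.2 = m.2.2.2 := by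
  have fixes_iff (q : V3) : A *ᵥ q + (x - A *ᵥ x) = q ↔ A *ᵥ (q - x) = q - x := by
    rw [mulVec_sub]
    constructor <;> intro h <;> linear_combination (norm := module) h
  obtain ⟨q₁, q₂, p₁, p₂⟩ := m
  simp only [act, Prod.mk.injEq, fixes_iff]

theorem isotropy_canonical_eq_G3 (x y : V3) {l b c d : ℝ} (h : c ≠ 0 ∨ d ≠ 0 ∨ l ≠ b) :
    isotropy (l • y + x, b • y + x, c • y, d • y) = G3 x y := by
  ext ⟨A, a⟩
  change SO3 A ∧ act A a _ = _ ↔ SO3 A ∧ A *ᵥ y = y ∧ a = x - A *ᵥ x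
  constructor
  · rintro ⟨hA, hact⟩
    simp only [act, Prod.mk.injEq] at hact
    obtain ⟨h1, h2, h3, h4⟩ := hact
    have hAy : A *ᵥ y = y := by
      rcases h with hc | hd | hlb
      · exact mulVec_eq_self_of_smul hc h3
      · exact mulVec_eq_self_of_smul hd h4
      · refine mulVec_eq_self_of_smul (sub_ne_zero.2 hlb) ?_
        have hdiff : (l - b) • y = (l • y + x) - (b • y + x) := by module
        rw [hdiff, mulVec_sub]
        linear_combination (norm := module) h1 - h2
    refine ⟨hA, hAy, ?_⟩
    rw [mulVec_add, mulVec_smul, hAy] at h1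
    linear_combination (norm := module) h1
  · rintro ⟨hA, hAy, rfl⟩
    refine ⟨hA, (act_sub_mulVec_eq_self_iff _ _ _).2 ?_⟩
    simp only [add_sub_cancel_right, mulVec_smul, hAy, and_self]

theorem exists_canonical_of_isotropy_eq_G3 {x y : V3} (hy : y ≠ 0) {m : M2B}
    (hm : isotropy m = G3 x y) :
    ∃ l b c d : ℝ, m = (l • y + x, b • y + x, c • y, d • y) := by
  have hmem : (halfTurn y, x - halfTurn y *ᵥ x) ∈ isotropy m :=
    hm ▸ ⟨SO3_halfTurn hy, halfTurn_mulVec_self hy, rfl⟩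
  obtain ⟨h1, h2, h3, h4⟩ := (act_sub_mulVec_eq_self_iff _ _ _).1 hmem.2
  obtain ⟨l, hl⟩ := exists_eq_smul_of_halfTurn_mulVec_eq h1
  obtain ⟨b, hb⟩ := exists_eq_smul_of_halfTurn_mulVec_eq h2
  obtain ⟨c, hc⟩ := exists_eq_smul_of_halfTurn_mulVec_eq h3
  obtain ⟨d, hd⟩ := exists_eq_smul_of_halfTurn_mulVec_eq h4
  refine ⟨l, b, c, d, ?_⟩
  rw [← hl, ← hb, ← hc, ← hd]
  simp

theorem isotropy_collision_ne_G3 {x y : V3} (hxy : x ⨯₃ y ≠ 0) (q : V3) :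
    isotropy (q, q, 0, 0) ≠ G3 x y := by
  have hx : x ≠ 0 := by rintro rfl; simp at hxy
  intro h
  have hmem : (halfTurn x, q - halfTurn x *ᵥ q) ∈ isotropy (q, q, 0, 0) :=
    ⟨SO3_halfTurn hx, (act_sub_mulVec_eq_self_iff _ _ _).2 (by simp)⟩
  obtain ⟨e, rfl⟩ := exists_eq_smul_of_halfTurn_mulVec_eq (h ▸ hmem).2.1
  simp [cross_self] at hxy

theorem mem_D_union_iff {x y : V3} {m : M2B} :
    m ∈ D1 x y ∪ D2 x y ∪ D3 x y ∪ D4 x y ↔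
      ∃ l b c d : ℝ, (c ≠ 0 ∨ d ≠ 0 ∨ l ≠ b) ∧ m = (l • y + x, b • y + x, c • y, d • y) := by
  constructor
  · rintro (((⟨l, b, hlb, rfl⟩ | ⟨l, b, d, hd, rfl⟩) | ⟨l, b, c, hc, rfl⟩) |
      ⟨l, b, c, d, hc, -, rfl⟩)
    · exact ⟨l, b, 0, 0, Or.inr (Or.inr hlb), by simp⟩
    · exact ⟨l, b, 0, d, Or.inr (Or.inl hd), by simp⟩
    · exact ⟨l, b, c, 0, Or.inl hc, by simp⟩
    · exact ⟨l, b, c, d, Or.inl hc, rfl⟩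
  · rintro ⟨l, b, c, d, h, rfl⟩
    by_cases hc : c = 0 <;> by_cases hd : d = 0
    · exact .inl (.inl (.inl ⟨l, b, by simp_all, by simp [hc, hd]⟩))
    · exact .inl (.inl (.inr ⟨l, b, d, hd, by simp [hc]⟩))
    · exact .inl (.inr ⟨l, b, c, hc, by simp [hd]⟩)
    · exact .inr ⟨l, b, c, d, hc, hd, rfl⟩

section Momenta

variable {x y : V3} {m : M2B}

theorem momenta_of_mem_D1 (hm : m ∈ D1 x y) : m.2.2.1 = 0 ∧ m.2.2.2 = 0 := by
  obtain ⟨l, b, -, rfl⟩ := hm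
  exact ⟨rfl, rfl⟩

theorem momenta_of_mem_D2 (hy : y ≠ 0) (hm : m ∈ D2 x y) : m.2.2.1 = 0 ∧ m.2.2.2 ≠ 0 := by
  obtain ⟨l, b, d, hd, rfl⟩ := hm
  exact ⟨rfl, smul_ne_zero hd hy⟩

theorem momenta_of_mem_D3 (hy : y ≠ 0) (hm : m ∈ D3 x y) : m.2.2.1 ≠ 0 ∧ m.2.2.2 = 0 := by
  obtain ⟨l, b, c, hc, rfl⟩ := hm
  exact ⟨smul_ne_zero hc hy, rfl⟩

theorem momenta_of_mem_D4 (hy : y ≠ 0) (hm : m ∈ D4 x y) : m.2.2.1 ≠ 0 ∧ m.2.2.2 ≠ 0 := by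
  obtain ⟨l, b, c, d, hc, hd, rfl⟩ := hm
  exact ⟨smul_ne_zero hc hy, smul_ne_zero hd hy⟩

end Momenta

/-- The isotropy type set of G³(x,y) is the disjoint union D₁ ∪ D₂ ∪ D₃ ∪ D₄. -/
theorem stmt3 (x y : V3) (hxy : x ⨯₃ y ≠ 0) :
    {m : M2B | isotropy m = G3 x y} = D1 x y ∪ D2 x y ∪ D3 x y ∪ D4 x y ∧
    Disjoint (D1 x y) (D2 x y) ∧ Disjoint (D1 x y) (D3 x y) ∧ Disjoint (D1 x y) (D4 x y) ∧
    Disjoint (D2 x y) (D3 x y) ∧ Disjoint (D2 x y) (D4 x y) ∧ Disjoint (D3 x y) (D4 x y) := by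
  have hy : y ≠ 0 := by rintro rfl; simp at hxy
  refine ⟨?_, ?_, ?_, ?_, ?_, ?_, ?_⟩
  · ext m
    rw [Set.mem_ofPred_eq, mem_D_union_iff]
    constructor
    · intro hm
      obtain ⟨l, b, c, d, rfl⟩ := exists_canonical_of_isotropy_eq_G3 hy hm
      refine ⟨l, b, c, d, ?_, rfl⟩
      by_contra! hdeg
      obtain ⟨rfl, rfl, rfl⟩ := hdeg
      exact isotropy_collision_ne_G3 hxy _ (by simpa using hm)
    · rintro ⟨l, b, c, d, h, rfl⟩
      exact isotropy_canonical_eq_G3 x y h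
  all_goals
    refine Set.disjoint_left.2 fun m h h' => ?_
    have := @momenta_of_mem_D1 x y m
    have := @momenta_of_mem_D2 x y m hy
    have := @momenta_of_mem_D3 x y m hy
    have := @momenta_of_mem_D4 x y m hy
    tauto
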